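/- Let Ric : Matrix (Fin 4) (Fin 4) ℝ and let G : Matrix (Fin 4) (Fin 4) ℝ be symmetric with det G < 0. Define the Ricci-scalar-squared Lagrangian density L̃(Ric, G) = (1/2) ∑_{η,α,ξ,λ} Ric η α · Ric ξ λ · G η α · G ξ λ · (−det G)^{−1/2} (one half of the square of the Ricci scalar R = R_{ηα} g^{ηα} times √(−g)). Then for all μ, ν ∈ Fin 4 the metric energy-momentum tensor density equals the canonical one: ∑_{β} (∂L̃/∂G_{(ν,β)}) · G μ β + ∑_{β} (∂L̃/∂G_{(β,ν)}) · G β μ = ∑_{β} (∂L̃/∂Ric_{(μ,β)}) · Ric ν β + ∑_{β} (∂L̃/∂Ric_{(β,μ)}) · Ric β ν − (if μ = ν then L̃(Ric,G) else 0). -/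

import Mathlib

/-!
The Lagrangian depends on `(R, g)` only through the scalar `q = R_{ηα} g^{ηα}` and `d = det g`.
Differentiating `q` in `R_{μβ}` gives `g^{μβ}` and in `g^{νβ}` gives `R_{νβ}`, so the
`q`-contributions to the metric and canonical tensors coincide term by term. The
`d`-contributions are contracted with `g` through Jacobi's formula `g · adj g = det g · 1`,
giving `2 d ∂_d L δ^μ_ν`; this equals `-L δ^μ_ν` because `√(-g) = (-d)^(-1/2)` has weight
`-1/2` in `d`.
-/

attribute [local instance] Matrix.normedAddCommGroup Matrix.normedSpace

open Matrix

theorem HasFDerivAt.apply_eq_of_affine_on_line {E F : Type*}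
    [NormedAddCommGroup E] [NormedSpace ℝ E] [NormedAddCommGroup F] [NormedSpace ℝ F]
    {f : E → F} {f' : E →L[ℝ] F} {x v : E} {w : F} (hf : HasFDerivAt f f' x)
    (hline : ∀ t : ℝ, f (x + t • v) = f x + t • w) :
    f' v = w := by
  refine (hf.hasLineDerivAt v).unique ?_
  change HasDerivAt (fun t : ℝ => f (x + t • v)) w 0
  simpa [funext hline] using ((hasDerivAt_id (0 : ℝ)).smul_const w).const_add (f x)

namespace Matrix

variable {n : Type*} [Fintype n] [DecidableEq n]

theorem det_add_smul_single {R : Type*} [CommRing R] (A : Matrix n n R) (i j : n) (t : R) :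
    (A + t • single i j 1).det = A.det + t * A.adjugate j i := by
  have hrow : A + t • single i j 1 = A.updateRow i (A i + t • Pi.single j 1) := by
    ext r c
    rcases eq_or_ne r i with rfl | hr
    · simp [single_apply, Pi.single_apply, eq_comm]
    · simp [updateRow_ne hr, hr.symm]
  rw [hrow, det_updateRow_add, det_updateRow_smul, updateRow_eq_self, adjugate_apply]

theorem differentiable_det : Differentiable ℝ (det : Matrix n n ℝ → ℝ) := by
  simp only [funext det_apply]
  fun_prop

end Matrix

section RicciScalar

variable {n : Type*} [Fintype n]

def ricciScalar (R G : Matrix n n ℝ) : ℝ := ∑ η, ∑ α, R η α * G η α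

theorem ricciScalar_sq (R G : Matrix n n ℝ) :
    ricciScalar R G ^ 2 = ∑ η, ∑ α, ∑ ξ, ∑ l, R η α * R ξ l * G η α * G ξ l := by
  simp only [ricciScalar, sq, Finset.sum_mul, Finset.mul_sum]
  exact Finset.sum_congr rfl fun _ _ => Finset.sum_congr rfl fun _ _ =>
    Finset.sum_congr rfl fun _ _ => Finset.sum_congr rfl fun _ _ => by ring

variable [DecidableEq n]

theorem ricciScalar_add_smul_single_left (R G : Matrix n n ℝ) (i j : n) (t : ℝ) :
    ricciScalar (R + t • single i j 1) G = ricciScalar R G + t * G i j := by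
  simp [ricciScalar, add_mul, Finset.sum_add_distrib, single_apply, ite_and]

theorem ricciScalar_add_smul_single_right (R G : Matrix n n ℝ) (i j : n) (t : ℝ) :
    ricciScalar R (G + t • single i j 1) = ricciScalar R G + t * R i j := by
  simp [ricciScalar, mul_add, Finset.sum_add_distrib, single_apply, ite_and, mul_comm]

def scalarAndDet (x : Matrix n n ℝ × Matrix n n ℝ) : ℝ × ℝ :=
  (ricciScalar x.1 x.2, x.2.det)

theorem differentiable_scalarAndDet :
    Differentiable ℝ (scalarAndDet : Matrix n n ℝ × Matrix n n ℝ → ℝ × ℝ) := by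
  have hdet := differentiable_det (n := n)
  unfold scalarAndDet ricciScalar
  fun_prop

theorem fderiv_scalarAndDet_ricci (R G : Matrix n n ℝ) (i j : n) :
    fderiv ℝ scalarAndDet (R, G) (single i j 1, 0) = (G i j, 0) :=
  (differentiable_scalarAndDet _).hasFDerivAt.apply_eq_of_affine_on_line fun t => by
    simp only [scalarAndDet, Prod.smul_mk, Prod.mk_add_mk, smul_zero, add_zero, smul_eq_mul,
      mul_zero, ricciScalar_add_smul_single_left]

theorem fderiv_scalarAndDet_metric (R G : Matrix n n ℝ) (i j : n) :
    fderiv ℝ scalarAndDet (R, G) (0, single i j 1) = (R i j, G.adjugate j i) :=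
  (differentiable_scalarAndDet _).hasFDerivAt.apply_eq_of_affine_on_line fun t => by
    simp only [scalarAndDet, Prod.smul_mk, Prod.mk_add_mk, smul_zero, add_zero, smul_eq_mul,
      ricciScalar_add_smul_single_right, det_add_smul_single]

noncomputable def metricEMT (L : Matrix n n ℝ × Matrix n n ℝ → ℝ) (R G : Matrix n n ℝ)
    (μ ν : n) : ℝ :=
  (∑ β, fderiv ℝ L (R, G) (0, single ν β 1) * G μ β)
    + ∑ β, fderiv ℝ L (R, G) (0, single β ν 1) * G β μ

noncomputable def canonicalEMT (L : Matrix n n ℝ × Matrix n n ℝ → ℝ) (R G : Matrix n n ℝ)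
    (μ ν : n) : ℝ :=
  (∑ β, fderiv ℝ L (R, G) (single μ β 1, 0) * R ν β)
    + (∑ β, fderiv ℝ L (R, G) (single β μ 1, 0) * R β ν)
    - if μ = ν then L (R, G) else 0

theorem metricEMT_eq_canonicalEMT {f : ℝ × ℝ → ℝ} (R G : Matrix n n ℝ)
    (hf : DifferentiableAt ℝ f (scalarAndDet (R, G)))
    (hweight : 2 * G.det * fderiv ℝ f (scalarAndDet (R, G)) (0, 1) = -f (scalarAndDet (R, G)))
    (μ ν : n) :
    metricEMT (f ∘ scalarAndDet) R G μ ν = canonicalEMT (f ∘ scalarAndDet) R G μ ν := by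
  set f' := fderiv ℝ f (scalarAndDet (R, G))
  have hchain (v) :
      fderiv ℝ (f ∘ scalarAndDet) (R, G) v = f' (fderiv ℝ scalarAndDet (R, G) v) :=
    congrArg (· v) (hf.hasFDerivAt.comp (R, G) (differentiable_scalarAndDet _).hasFDerivAt).fderiv
  have hsplit (a b : ℝ) : f' (a, b) = a * f' (1, 0) + b * f' (0, 1) := by
    rw [show ((a, b) : ℝ × ℝ) = a • (1, 0) + b • (0, 1) by simp, map_add, map_smul,
      map_smul, smul_eq_mul, smul_eq_mul]
  have hricci (i j : n) :
      fderiv ℝ (f ∘ scalarAndDet) (R, G) (single i j 1, 0) = G i j * f' (1, 0) := by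
    rw [hchain, fderiv_scalarAndDet_ricci, hsplit, zero_mul, add_zero]
  have hmetric (i j : n) : fderiv ℝ (f ∘ scalarAndDet) (R, G) (0, single i j 1)
      = R i j * f' (1, 0) + G.adjugate j i * f' (0, 1) := by
    rw [hchain, fderiv_scalarAndDet_metric, hsplit]
  have hjacobi₁ : ∑ β, G.adjugate β ν * G μ β = if μ = ν then G.det else 0 := by
    simpa [mul_apply, one_apply, mul_comm] using congrFun₂ (mul_adjugate G) μ ν
  have hjacobi₂ : ∑ β, G.adjugate ν β * G β μ = if μ = ν then G.det else 0 := by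
    simpa [mul_apply, one_apply, eq_comm] using congrFun₂ (adjugate_mul G) ν μ
  have hsum₂ (a b c : n → ℝ) (x y : ℝ) :
      ∑ β, (a β * x + b β * y) * c β = x * ∑ β, a β * c β + y * ∑ β, b β * c β := by
    simp only [Finset.mul_sum, ← Finset.sum_add_distrib]
    exact Finset.sum_congr rfl fun _ _ => by ring
  have hsum₁ (a c : n → ℝ) (x : ℝ) : ∑ β, c β * x * a β = x * ∑ β, a β * c β := by
    simp only [Finset.mul_sum]
    exact Finset.sum_congr rfl fun _ _ => by ring
  simp only [metricEMT, canonicalEMT, hricci, hmetric, Function.comp_apply]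
  rw [hsum₂, hsum₂, hsum₁, hsum₁, hjacobi₁, hjacobi₂]
  split_ifs
  · linear_combination hweight
  · ring

end RicciScalar

noncomputable def scalarSquaredDensity (p : ℝ × ℝ) : ℝ :=
  1 / 2 * p.1 ^ 2 * (-p.2) ^ (-(1 / 2) : ℝ)

theorem differentiableAt_scalarSquaredDensity {q d : ℝ} (hd : d < 0) :
    DifferentiableAt ℝ scalarSquaredDensity (q, d) := by
  unfold scalarSquaredDensity
  fun_prop (disch := simp [hd.ne])

theorem scalarSquaredDensity_weight {q d : ℝ} (hd : d < 0) :
    2 * d * fderiv ℝ scalarSquaredDensity (q, d) (0, 1) = -scalarSquaredDensity (q, d) := by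
  have hline : HasLineDerivAt ℝ scalarSquaredDensity
      (1 / 2 * q ^ 2 * (-(1 / 2) * (-d) ^ (-(1 / 2) - 1 : ℝ) * -1)) (q, d) (0, 1) := by
    have hshift : HasDerivAt (fun t : ℝ => -(d + t)) (-1) 0 := ((hasDerivAt_id 0).const_add d).neg
    have hderiv := (hshift.rpow_const (p := -(1 / 2)) (Or.inl (by simp [hd.ne]))).const_mul
      (1 / 2 * q ^ 2)
    simpa [HasLineDerivAt, scalarSquaredDensity] using hderiv
  rw [((differentiableAt_scalarSquaredDensity hd).hasFDerivAt.hasLineDerivAt (0, 1)).unique hline]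
  have hpow : (-d) ^ (-(1 / 2) - 1 : ℝ) * -d = (-d) ^ (-(1 / 2) : ℝ) := by
    rw [← Real.rpow_add_one (by linarith)]
    norm_num
  unfold scalarSquaredDensity
  linear_combination (-1 / 2 * q ^ 2) * hpow

theorem ricci_scalar_squared_emt_identity_general
    (Ric G : Matrix (Fin 4) (Fin 4) ℝ) (hdet : G.det < 0)
    (L : Matrix (Fin 4) (Fin 4) ℝ × Matrix (Fin 4) (Fin 4) ℝ → ℝ)
    (hL : L = fun x =>
      (1 / 2) * (∑ η, ∑ α, ∑ ξ, ∑ l, x.1 η α * x.1 ξ l * x.2 η α * x.2 ξ l)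
        * (-x.2.det) ^ (-(1 / 2) : ℝ)) :
    ∀ μ ν : Fin 4,
      (∑ β, fderiv ℝ L (Ric, G) (0, Matrix.single ν β 1) * G μ β)
      + (∑ β, fderiv ℝ L (Ric, G) (0, Matrix.single β ν 1) * G β μ)
      = (∑ β, fderiv ℝ L (Ric, G) (Matrix.single μ β 1, 0) * Ric ν β)
        + (∑ β, fderiv ℝ L (Ric, G) (Matrix.single β μ 1, 0) * Ric β ν)
        - (if μ = ν then L (Ric, G) else 0) := by
  have hL' : L = scalarSquaredDensity ∘ scalarAndDet := by
    subst hL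
    funext x
    simp only [Function.comp_apply, scalarSquaredDensity, scalarAndDet, ricciScalar_sq]
  subst hL'
  exact metricEMT_eq_canonicalEMT Ric G (differentiableAt_scalarSquaredDensity hdet)
    (scalarSquaredDensity_weight hdet)

/-- for quadratic gravity with the Ricci scalar squared, the metric
energy-momentum tensor density equals the canonical one. -/
theorem ricci_scalar_squared_emt_identity
    (Ric G : Matrix (Fin 4) (Fin 4) ℝ) (hG : G.IsSymm) (hdet : G.det < 0)
    (L : Matrix (Fin 4) (Fin 4) ℝ × Matrix (Fin 4) (Fin 4) ℝ → ℝ)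
    (hL : L = fun x =>
      (1 / 2) * (∑ η, ∑ α, ∑ ξ, ∑ l, x.1 η α * x.1 ξ l * x.2 η α * x.2 ξ l)
        * (-x.2.det) ^ (-(1 / 2) : ℝ)) :
    ∀ μ ν : Fin 4,
      (∑ β, fderiv ℝ L (Ric, G) (0, Matrix.single ν β 1) * G μ β)
      + (∑ β, fderiv ℝ L (Ric, G) (0, Matrix.single β ν 1) * G β μ)
      = (∑ β, fderiv ℝ L (Ric, G) (Matrix.single μ β 1, 0) * Ric ν β)
        + (∑ β, fderiv ℝ L (Ric, G) (Matrix.single β μ 1, 0) * Ric β ν)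
        - (if μ = ν then L (Ric, G) else 0) :=
  ricci_scalar_squared_emt_identity_general Ric G hdet L hL
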